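/- arXiv:1304.3600 — 5 statements merged into one kernel-verified Lean document; each statement's English description precedes it below -/
import Mathlib

section
/- For all n ≥ 3, L(C_n) = L(P_{n−1}) / (n · C(n−1, 2)), where C_n is the cycle graph on n vertices, P_{n−1} is the path graph on n−1 vertices, and C(n−1,2) is the binomial coefficient. -/
/-!
Deleting the last vertex of a labeled copy of `C_n` leaves a labeled copy of `P_{n-1}`, and this
is a bijection: since every vertex of a cycle has degree two, the last vertex is joined exactly to
the vertices whose degree drops when it is deleted, and conversely any labeled path is closed up
by pulling back the cycle along the labeling. Deleting the last vertex does not change `d_i` for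
the other vertices, while the last vertex has both of its neighbours below it, so it contributes
the factor `n · C(n-1, 2)` to the weight of its copy.
-/

open Finset

/-- The number of neighbors `j` of vertex `i` with `j < i`. -/
noncomputable def dBelow {t : ℕ} (G' : SimpleGraph (Fin t)) (i : Fin t) : ℕ :=
  Set.ncard {j | G'.Adj i j ∧ j < i}

open Classical in
/-- The graph likelihood: the sum over all labeled copies `G'` of `G` on `{1,…,t}`
of `1/(t! · ∏_{i=1}^t C(i-1, d_i(G')))`. -/
noncomputable def likelihood {t : ℕ} (G : SimpleGraph (Fin t)) : ℝ :=
  ∑ G' ∈ Finset.univ.filter (fun G' : SimpleGraph (Fin t) => Nonempty (G' ≃g G)),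
    1 / ((t.factorial : ℝ) * ∏ i : Fin t, ((i : ℕ).choose (dBelow G' i) : ℝ))

namespace SimpleGraph

open Fin

section Iso

variable {V W : Type*} {G : SimpleGraph V} {H : SimpleGraph W}

theorem Iso.ncard_neighborSet (e : G ≃g H) (v : V) :
    (H.neighborSet (e v)).ncard = (G.neighborSet v).ncard := by
  rw [← e.image_neighborSet, Set.ncard_image_of_injective _ e.injective]

def circulantGraphAddRightIso {A : Type*} [AddGroup A] (s : Set A) (d : A) :
    circulantGraph s ≃g circulantGraph s where
  toEquiv := Equiv.addRight d
  map_rel_iff' := circulantGraph_adj_translate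

theorem exists_iso_cycleGraph_apply_eq {n : ℕ} (e : G ≃g cycleGraph (n + 1)) (v : V)
    (w : Fin (n + 1)) : ∃ f : G ≃g cycleGraph (n + 1), f v = w := by
  rw [cycleGraph_eq_circulantGraph] at e ⊢
  exact ⟨e.trans (circulantGraphAddRightIso _ (-e v + w)), by simp [circulantGraphAddRightIso]⟩

end Iso

theorem ncard_neighborSet_cycleGraph {n : ℕ} (hn : 3 ≤ n) (v : Fin n) :
    ((cycleGraph n).neighborSet v).ncard = 2 := by
  obtain ⟨n, rfl⟩ : ∃ k, n = k + 3 := ⟨n - 3, by omega⟩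
  classical
  rw [← cycleGraph_degree_three_le (v := v), ← card_neighborSet_eq_degree,
    Set.ncard_eq_toFinset_card', Set.toFinset_card]

theorem ncard_neighborSet_of_iso_cycleGraph {n : ℕ} (hn : 3 ≤ n) {G : SimpleGraph (Fin n)}
    (e : G ≃g cycleGraph n) (v : Fin n) : (G.neighborSet v).ncard = 2 := by
  rw [← e.ncard_neighborSet, ncard_neighborSet_cycleGraph hn]

theorem comap_castSucc_cycleGraph (n : ℕ) :
    (cycleGraph (n + 1)).comap castSucc = pathGraph n := by
  have sub_eq_one (x y : Fin n) :
      ((castSucc x - castSucc y : Fin (n + 1)) : ℕ) = 1 ↔ (y : ℕ) + 1 = x := by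
    have := y.isLt
    rcases le_or_gt y x with h | h
    · rw [coe_sub_iff_le.mpr (castSucc_le_castSucc_iff.mpr h), val_castSucc, val_castSucc]
      omega
    · rw [coe_sub_iff_lt.mpr (castSucc_lt_castSucc_iff.mpr h), val_castSucc, val_castSucc]
      omega
  ext a b
  rw [comap_adj, cycleGraph_adj', pathGraph_adj, sub_eq_one, sub_eq_one, or_comm]

variable {n : ℕ}

theorem image_castSucc_neighborSet_comap (G : SimpleGraph (Fin (n + 1))) (v : Fin n) :
    castSucc '' (G.comap castSucc).neighborSet v = G.neighborSet v.castSucc \ {last n} := by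
  rw [neighborSet_comap, Set.image_preimage_eq_inter_range, range_castSucc]
  ext x
  simp [Fin.ext_iff, lt_iff_le_and_ne, Nat.le_of_lt_succ x.isLt]

theorem ncard_neighborSet_castSucc (G : SimpleGraph (Fin (n + 1))) (v : Fin n)
    [Decidable (G.Adj v.castSucc (last n))] :
    (G.neighborSet v.castSucc).ncard =
      ((G.comap castSucc).neighborSet v).ncard + if G.Adj v.castSucc (last n) then 1 else 0 := by
  rw [← Set.ncard_image_of_injective _ (castSucc_injective n),
    image_castSucc_neighborSet_comap]
  split_ifs with h
  · exact (Set.ncard_sdiff_singleton_add_one h).symm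
  · rw [Set.sdiff_singleton_eq_self (s := G.neighborSet _) h, add_zero]

theorem eq_of_comap_castSucc_eq {G H : SimpleGraph (Fin (n + 1))}
    (hdeg : ∀ v : Fin n, (G.neighborSet v.castSucc).ncard = (H.neighborSet v.castSucc).ncard)
    (h : G.comap castSucc = H.comap castSucc) : G = H := by
  classical
  have adj_last (v : Fin n) : G.Adj v.castSucc (last n) ↔ H.Adj v.castSucc (last n) := by
    have hv := hdeg v
    rw [ncard_neighborSet_castSucc, ncard_neighborSet_castSucc, h] at hv
    split_ifs at hv <;> simp_all
  ext a b
  induction a using lastCases with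
  | last => induction b using lastCases with
    | last => simp
    | cast v => rw [adj_comm, adj_comm H, adj_last]
  | cast u => induction b using lastCases with
    | last => exact adj_last u
    | cast v => rw [← comap_adj, h, comap_adj]

def Iso.comapCastSucc {G H : SimpleGraph (Fin (n + 1))} (f : G ≃g H) (hf : f (last n) = last n) :
    G.comap castSucc ≃g H.comap castSucc where
  toFun i := (f i.castSucc).castPred fun h => castSucc_ne_last i (f.injective (h.trans hf.symm))
  invFun j := (f.symm j.castSucc).castPred fun h =>
    castSucc_ne_last j (by rw [← hf, ← h, f.apply_symm_apply])
  left_inv i := by simp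
  right_inv j := by simp
  map_rel_iff' := by simp [f.map_adj_iff]

theorem comap_castSucc_comap_viaFintypeEmbedding (G : SimpleGraph (Fin (n + 1)))
    (q : Equiv.Perm (Fin n)) :
    (G.comap (q.viaFintypeEmbedding castSuccEmb)).comap castSucc = (G.comap castSucc).comap q := by
  ext a b
  simp [← coe_castSuccEmb]

theorem nonempty_comap_castSucc_iso_pathGraph {G : SimpleGraph (Fin (n + 1))}
    (e : G ≃g cycleGraph (n + 1)) : Nonempty (G.comap castSucc ≃g pathGraph n) := by
  obtain ⟨f, hf⟩ := exists_iso_cycleGraph_apply_eq e (last n) (last n)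
  rw [← comap_castSucc_cycleGraph]
  exact ⟨f.comapCastSucc hf⟩

theorem exists_comap_castSucc_eq_of_iso_pathGraph {H : SimpleGraph (Fin n)}
    (e : H ≃g pathGraph n) :
    ∃ G : SimpleGraph (Fin (n + 1)), Nonempty (G ≃g cycleGraph (n + 1)) ∧
      G.comap castSucc = H := by
  refine ⟨(cycleGraph (n + 1)).comap (Equiv.Perm.viaFintypeEmbedding e.toEquiv castSuccEmb),
    ⟨Iso.comap _ _⟩, ?_⟩
  rw [comap_castSucc_comap_viaFintypeEmbedding, comap_castSucc_cycleGraph]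
  ext
  exact e.map_adj_iff

end SimpleGraph

open SimpleGraph Fin

section Weight

variable {n : ℕ}

theorem dBelow_castSucc (G : SimpleGraph (Fin (n + 1))) (i : Fin n) :
    dBelow G i.castSucc = dBelow (G.comap castSucc) i := by
  rw [dBelow, dBelow, ← Set.ncard_image_of_injective _ (castSucc_injective n)]
  congr 1
  ext j
  induction j using lastCases <;> simp [(castSucc_lt_last i).not_gt]

theorem dBelow_last (G : SimpleGraph (Fin (n + 1))) :
    dBelow G (last n) = (G.neighborSet (last n)).ncard := by
  rw [dBelow]
  congr 1
  ext j
  simpa using fun h => lt_last_iff_ne_last.mpr (G.ne_of_adj h).symm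

noncomputable def copyWeight {t : ℕ} (G : SimpleGraph (Fin t)) : ℝ :=
  1 / ((t.factorial : ℝ) * ∏ i : Fin t, ((i : ℕ).choose (dBelow G i) : ℝ))

open Classical in
theorem likelihood_eq_sum_copyWeight {t : ℕ} (G : SimpleGraph (Fin t)) :
    likelihood G =
      ∑ G' ∈ univ.filter (fun G' : SimpleGraph (Fin t) => Nonempty (G' ≃g G)), copyWeight G' :=
  rfl

theorem copyWeight_eq_div (G : SimpleGraph (Fin (n + 1))) :
    copyWeight G = copyWeight (G.comap castSucc) /
      (((n + 1 : ℕ) : ℝ) * (n.choose (dBelow G (last n)) : ℝ)) := by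
  simp only [copyWeight, prod_univ_castSucc, dBelow_castSucc, val_castSucc, val_last,
    Nat.factorial_succ, Nat.cast_mul, mul_inv, div_eq_mul_inv]
  ring

end Weight

theorem likelihood_cycleGraph (n : ℕ) (hn : 3 ≤ n) :
    likelihood (SimpleGraph.cycleGraph n) =
      likelihood (SimpleGraph.pathGraph (n - 1)) / ((n : ℝ) * ((n - 1).choose 2 : ℝ)) := by
  obtain ⟨n, rfl⟩ : ∃ k, n = k + 1 := ⟨n - 1, by omega⟩
  rw [likelihood_eq_sum_copyWeight, likelihood_eq_sum_copyWeight, Nat.add_sub_cancel, sum_div]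
  refine sum_nbij (fun G => G.comap castSucc) ?_ ?_ ?_ ?_ <;>
    simp only [coe_filter, mem_filter, mem_univ, true_and, Set.InjOn, Set.SurjOn,
      Set.subset_def, Set.mem_ofPred_eq, Set.mem_image]
  · rintro G ⟨e⟩
    exact nonempty_comap_castSucc_iso_pathGraph e
  · rintro G₁ ⟨e₁⟩ G₂ ⟨e₂⟩ h
    refine eq_of_comap_castSucc_eq (fun v => ?_) h
    rw [ncard_neighborSet_of_iso_cycleGraph hn e₁, ncard_neighborSet_of_iso_cycleGraph hn e₂]
  · rintro H ⟨e⟩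
    exact exists_comap_castSucc_eq_of_iso_pathGraph e
  · rintro G ⟨e⟩
    rw [copyWeight_eq_div, dBelow_last, ncard_neighborSet_of_iso_cycleGraph hn e]
end

section
/- For every simple graph G, the likelihood of G equals the likelihood of its complement: L(G) = L(Ḡ). -/
/-!
Complementation is an involution on labeled graphs which maps the labeled copies of `G` onto
those of `Gᶜ`. It turns the `d_i` earlier neighbours of vertex `i` into `i - d_i`, and
`C(i, d_i) = C(i, i - d_i)`, so every term of the likelihood sum is preserved.
-/

open Finset

namespace SimpleGraph

def Iso.compl {V W : Type*} {A : SimpleGraph V} {B : SimpleGraph W} (f : A ≃g B) :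
    Aᶜ ≃g Bᶜ where
  toEquiv := f.toEquiv
  map_rel_iff' := by simp [f.map_adj_iff]

theorem nonempty_iso_compl_iff {V W : Type*} {A : SimpleGraph V} {B : SimpleGraph W} :
    Nonempty (Aᶜ ≃g Bᶜ) ↔ Nonempty (A ≃g B) :=
  ⟨fun ⟨f⟩ => ⟨by simpa using f.compl⟩, fun ⟨f⟩ => ⟨f.compl⟩⟩

end SimpleGraph

section dBelow

variable {t : ℕ} (G' : SimpleGraph (Fin t)) (i : Fin t)

theorem dBelow_eq_card [DecidableRel G'.Adj] : dBelow G' i = #{j ∈ Iio i | G'.Adj i j} := by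
  rw [dBelow, ← Set.ncard_coe_finset]
  congr 1
  ext j
  simp [and_comm]

theorem dBelow_le : dBelow G' i ≤ i := by
  classical
  rw [dBelow_eq_card, ← Fin.card_Iio i]
  exact card_filter_le _ _

theorem dBelow_compl : dBelow G'ᶜ i = i - dBelow G' i := by
  classical
  have h : {j ∈ Iio i | G'ᶜ.Adj i j} = {j ∈ Iio i | ¬G'.Adj i j} :=
    filter_congr fun j hj => by simp [(mem_Iio.1 hj).ne']
  rw [dBelow_eq_card, dBelow_eq_card, h, filter_not, card_sdiff_of_subset (filter_subset _ _),
    Fin.card_Iio]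

theorem choose_dBelow_compl : (i : ℕ).choose (dBelow G'ᶜ i) = (i : ℕ).choose (dBelow G' i) := by
  rw [dBelow_compl, Nat.choose_symm (dBelow_le G' i)]

end dBelow

theorem likelihood_compl {t : ℕ} (G : SimpleGraph (Fin t)) :
    likelihood G = likelihood Gᶜ := by
  classical
  refine sum_nbij' compl compl (fun G' hG' => ?_) (fun G' hG' => ?_)
    (fun G' _ => compl_compl G') (fun G' _ => compl_compl G') (fun G' _ => ?_)
  · simpa [SimpleGraph.nonempty_iso_compl_iff] using hG'
  · simpa [← SimpleGraph.nonempty_iso_compl_iff (A := G'ᶜ)] using hG'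
  · simp only [choose_dBelow_compl]
end

section
/- Let G be a simple graph on t vertices whose edge set consists of exactly s pairwise disjoint edges (a matching of size s, so the edges are incident with 2s distinct vertices, 2s ≤ t). Then L(G) = (1/t!) · Σ_{2 ≤ i_1 < i_2 < ⋯ < i_s ≤ t} ∏_{j=1}^{s} (i_j + 1 − 2j)/(i_j − 1). -/
/-!
In a graph of maximum degree one, sending each vertex to its neighbour (or to itself when it is
isolated) is an involution `partner`, and two such graphs are isomorphic exactly when their
involutions are conjugate, i.e. when they have the same number of edges. So the labeled copies
of `G` are the matchings with `s` edges on `{1,…,t}`.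

In a matching `d_i ∈ {0, 1}`, with `d_i = 1` exactly at the upper endpoints of the edges, so a
copy contributes `1 / (t! ∏ (i - 1))`, the product running over its upper endpoints. The matchings
with upper endpoints `i_1 < ⋯ < i_s` are built by joining each `i_j` to one of the
`i_j - 1 - 2(j - 1)` smaller vertices not used by `i_1, …, i_{j-1}`; this gives the factor
`(i_j + 1 - 2j) / (i_j - 1)`.
-/

open Finset

theorem Equiv.Perm.isConj_of_sq_eq_one {α : Type*} [Fintype α] [DecidableEq α]
    {σ τ : Equiv.Perm α} (hσ : σ ^ 2 = 1) (hτ : τ ^ 2 = 1) (h : #σ.support = #τ.support) :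
    IsConj σ τ := by
  have cycleType_eq : ∀ π : Equiv.Perm α, π ^ 2 = 1 →
      π.cycleType = Multiset.replicate (#π.support / 2) 2 := by
    intro π hπ
    rw [Equiv.Perm.cycleType_of_pow_prime_eq_one hπ, ← Equiv.Perm.sum_cycleType,
      Equiv.Perm.cycleType_of_pow_prime_eq_one hπ]
    simp
  rw [Equiv.Perm.isConj_iff_cycleType_eq, cycleType_eq σ hσ, cycleType_eq τ hτ, h]

theorem Finset.prod_range_card_sort_getD {α β : Type*} [LinearOrder α] [CommMonoid β]
    (B : Finset α) (d : α) (g : α → ℕ → β) :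
    ∏ j ∈ range #B, g ((B.sort (· ≤ ·)).getD j d) j = ∏ b ∈ B, g b #{x ∈ B | x < b} := by
  induction B using Finset.induction_on_min generalizing g with
  | empty => simp
  | insert a B ha ih =>
    have hna : a ∉ B := fun h => lt_irrefl a (ha a h)
    have hrank_a : #{x ∈ insert a B | x < a} = 0 := by
      rw [card_eq_zero, filter_eq_empty_iff]
      intro x hx
      rcases mem_insert.mp hx with rfl | hx
      · exact lt_irrefl x
      · exact (ha x hx).not_gt
    have hrank (b : α) (hb : b ∈ B) : #{x ∈ insert a B | x < b} = #{x ∈ B | x < b} + 1 := by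
      rw [filter_insert, if_pos (ha b hb), card_insert_of_notMem fun h => hna (mem_filter.mp h).1]
    rw [sort_insert (· ≤ ·) (fun b hb => (ha b hb).le) hna, card_insert_of_notMem hna,
      prod_range_succ', prod_insert hna, hrank_a, mul_comm]
    simp only [List.getD_cons_succ, List.getD_cons_zero]
    rw [ih fun b j => g b (j + 1)]
    exact congrArg _ (prod_congr rfl fun b hb => by rw [hrank b hb])

/-- A vertex `v : Fin t` stands for the label `v + 1 ∈ {1,…,t}`. -/
theorem sum_powersetCard_Icc_prod_sort {β : Type*} [CommSemiring β] (t s : ℕ)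
    (f : ℕ → ℕ → β) :
    ∑ A ∈ (Icc 2 t).powersetCard s, ∏ j ∈ range s, f ((A.sort (· ≤ ·)).getD j 0) j =
      ∑ A ∈ powersetCard s {v : Fin t | 0 < (v : ℕ)}, ∏ a ∈ A, f (a + 1) #{x ∈ A | x < a} := by
  let e : Fin t ↪ ℕ := Fin.valEmbedding.trans (addRightEmbedding 1)
  have he (v : Fin t) : e v = v + 1 := rfl
  have hIcc : Icc 2 t = ({v | 0 < (v : ℕ)} : Finset (Fin t)).map e := by
    ext n
    simp only [mem_Icc, mem_map, mem_filter, mem_univ, true_and, he]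
    constructor
    · intro hn
      exact ⟨⟨n - 1, by omega⟩, (by omega : 0 < n - 1), (by omega : n - 1 + 1 = n)⟩
    · rintro ⟨v, hv, rfl⟩
      have := v.isLt
      omega
  rw [hIcc, powersetCard_map, sum_map]
  refine sum_congr rfl fun A hA => ?_
  rw [← (mem_powersetCard.mp hA).2, RelEmbedding.coe_toEmbedding, mapEmbedding_apply,
    ← card_map e, prod_range_card_sort_getD, prod_map]
  refine prod_congr rfl fun a _ => ?_
  rw [filter_map, card_map]
  simp [he]

namespace SimpleGraph

section Partner

variable {V : Type*} {M : SimpleGraph V} {v w : V}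

open Classical in
noncomputable def partner (M : SimpleGraph V) (v : V) : V :=
  if h : ∃ w, M.Adj v w then h.choose else v

theorem partner_eq_self (h : ∀ w, ¬ M.Adj v w) : M.partner v = v := by
  simp [partner, h]

theorem adj_partner (h : M.Adj v w) : M.Adj v (M.partner v) := by
  have hv : ∃ w, M.Adj v w := ⟨w, h⟩
  simpa [partner, hv] using hv.choose_spec

theorem adj_partner_of_ne (h : M.partner v ≠ v) : M.Adj v (M.partner v) := by
  by_contra hv
  exact h (partner_eq_self fun w hw => hv (adj_partner hw))

theorem partner_eq_of_adj (hM : ∀ v, (M.neighborSet v).Subsingleton) (h : M.Adj v w) :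
    M.partner v = w :=
  hM v (adj_partner h) h

theorem adj_iff_partner_eq (hM : ∀ v, (M.neighborSet v).Subsingleton) :
    M.Adj v w ↔ v ≠ w ∧ M.partner v = w := by
  refine ⟨fun h => ⟨h.ne, partner_eq_of_adj hM h⟩, ?_⟩
  rintro ⟨hne, rfl⟩
  exact adj_partner_of_ne (Ne.symm hne)

theorem partner_involutive (hM : ∀ v, (M.neighborSet v).Subsingleton) :
    Function.Involutive M.partner := by
  intro v
  by_cases hv : M.partner v = v
  · rw [hv, hv]
  · exact partner_eq_of_adj hM (adj_partner_of_ne hv).symm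

theorem partner_eq_of_forall_adj_iff {f : V → V} (h : ∀ v w, M.Adj v w ↔ v ≠ w ∧ f v = w) :
    M.partner = f := by
  funext v
  by_cases hv : f v = v
  · rw [hv, partner_eq_self fun w hw => ((h v w).mp hw).1 (hv ▸ ((h v w).mp hw).2)]
  · exact ((h v _).mp (adj_partner ((h v (f v)).mpr ⟨Ne.symm hv, rfl⟩))).2.symm

theorem neighborSet_subsingleton_of_forall_adj_iff {f : V → V}
    (h : ∀ v w, M.Adj v w ↔ v ≠ w ∧ f v = w) (v : V) : (M.neighborSet v).Subsingleton :=
  fun _ h₁ _ h₂ => ((h v _).mp h₁).2.symm.trans ((h v _).mp h₂).2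

theorem card_filter_partner_ne [Fintype V] [DecidableEq V]
    (hM : ∀ v, (M.neighborSet v).Subsingleton) :
    #{v | M.partner v ≠ v} = 2 * M.edgeSet.ncard := by
  classical
  have hdeg (v : V) : M.degree v = if M.partner v ≠ v then 1 else 0 := by
    have : M.neighborFinset v = if M.partner v ≠ v then {M.partner v} else ∅ := by
      ext w
      rw [mem_neighborFinset, adj_iff_partner_eq hM]
      split_ifs <;> simp only [mem_singleton, notMem_empty] <;> grind
    rw [← card_neighborFinset_eq_degree, this]
    split_ifs <;> rfl
  rw [card_filter, ← sum_congr rfl fun v _ => hdeg v, sum_degrees_eq_twice_card_edges,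
    Set.ncard_eq_toFinset_card']
  rfl

noncomputable def partnerPerm (hM : ∀ v, (M.neighborSet v).Subsingleton) : Equiv.Perm V :=
  Function.Involutive.toPerm _ (partner_involutive hM)

@[simp]
theorem partnerPerm_apply (hM : ∀ v, (M.neighborSet v).Subsingleton) :
    partnerPerm hM v = M.partner v :=
  rfl

theorem partnerPerm_sq (hM : ∀ v, (M.neighborSet v).Subsingleton) : partnerPerm hM ^ 2 = 1 :=
  Equiv.ext (partner_involutive hM)

theorem nonempty_iso_of_ncard_edgeSet_eq [Fintype V] {G : SimpleGraph V}
    (hM : ∀ v, (M.neighborSet v).Subsingleton) (hG : ∀ v, (G.neighborSet v).Subsingleton)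
    (h : M.edgeSet.ncard = G.edgeSet.ncard) : Nonempty (M ≃g G) := by
  classical
  have hsupport : #(partnerPerm hM).support = #(partnerPerm hG).support :=
    (card_filter_partner_ne hM).trans (h ▸ (card_filter_partner_ne hG).symm)
  obtain ⟨c, hc⟩ := isConj_iff.mp <|
    Equiv.Perm.isConj_of_sq_eq_one (partnerPerm_sq hM) (partnerPerm_sq hG) hsupport
  have hconj (v : V) : G.partner (c v) = c (M.partner v) := by
    simpa using (congrArg (· (c v)) hc).symm
  refine ⟨⟨c, fun {u v} => ?_⟩⟩
  rw [adj_iff_partner_eq hG, adj_iff_partner_eq hM, hconj, c.injective.ne_iff,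
    c.injective.eq_iff]

theorem nonempty_iso_iff [Fintype V] {G : SimpleGraph V}
    (hG : ∀ v, (G.neighborSet v).Subsingleton) :
    Nonempty (M ≃g G) ↔
      (∀ v, (M.neighborSet v).Subsingleton) ∧ M.edgeSet.ncard = G.edgeSet.ncard := by
  refine ⟨fun ⟨f⟩ => ⟨fun v => ?_, ?_⟩, fun h => nonempty_iso_of_ncard_edgeSet_eq h.1 hG h.2⟩
  · exact (Set.subsingleton_coe _).mp <|
      (f.mapNeighborSet v).subsingleton_congr.mpr (hG (f v)).coe_sort
  · rw [← Nat.card_coe_set_eq, ← Nat.card_coe_set_eq]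
    exact Nat.card_congr f.mapEdgeSet

end Partner

section AddRemoveEdge

variable {V : Type*} {M : SimpleGraph V} {a b v w : V}

theorem adj_sup_edge_iff [DecidableEq V] (hM : ∀ v, (M.neighborSet v).Subsingleton)
    (ha : M.partner a = a) (hb : M.partner b = b) (hab : a ≠ b) :
    (M ⊔ edge a b).Adj v w ↔
      v ≠ w ∧ (if v = a then b else if v = b then a else M.partner v) = w := by
  rw [sup_adj, edge_adj, adj_iff_partner_eq hM]
  split_ifs <;> grind

theorem partner_sup_edge [DecidableEq V] (hM : ∀ v, (M.neighborSet v).Subsingleton)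
    (ha : M.partner a = a) (hb : M.partner b = b) (hab : a ≠ b) :
    (M ⊔ edge a b).partner v = if v = a then b else if v = b then a else M.partner v :=
  congrFun (partner_eq_of_forall_adj_iff fun _ _ => adj_sup_edge_iff hM ha hb hab) v

theorem adj_deleteIncidenceSet_iff [DecidableEq V] (hM : ∀ v, (M.neighborSet v).Subsingleton) :
    (M.deleteIncidenceSet a).Adj v w ↔
      v ≠ w ∧ (if v = a ∨ v = M.partner a then v else M.partner v) = w := by
  rw [deleteIncidenceSet_adj, adj_iff_partner_eq hM]
  have := partner_involutive hM v
  have := partner_involutive hM a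
  split_ifs <;> grind

theorem partner_deleteIncidenceSet [DecidableEq V] (hM : ∀ v, (M.neighborSet v).Subsingleton) :
    (M.deleteIncidenceSet a).partner v = if v = a ∨ v = M.partner a then v else M.partner v :=
  congrFun (partner_eq_of_forall_adj_iff fun _ _ => adj_deleteIncidenceSet_iff hM) v

theorem deleteIncidenceSet_sup_edge (ha : ∀ w, ¬ M.Adj a w) :
    (M ⊔ edge a b).deleteIncidenceSet a = M := by
  ext v w
  rw [deleteIncidenceSet_adj, sup_adj, edge_adj]
  have := fun w => (M.adj_comm w a).not.mpr (ha w)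
  grind

theorem sup_edge_deleteIncidenceSet (hM : ∀ v, (M.neighborSet v).Subsingleton)
    (ha : M.partner a ≠ a) : M.deleteIncidenceSet a ⊔ edge a (M.partner a) = M := by
  ext v w
  rw [sup_adj, deleteIncidenceSet_adj, edge_adj, adj_iff_partner_eq hM]
  have := partner_involutive hM v
  have := partner_involutive hM a
  grind

end AddRemoveEdge

section Fin

variable {t : ℕ} {M : SimpleGraph (Fin t)} {a b : Fin t} {A : Finset (Fin t)}

/-- In a matching these are the vertices `i` with `d_i = 1`. -/
noncomputable def upperEndpoints (M : SimpleGraph (Fin t)) : Finset (Fin t) :=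
  {v | M.partner v < v}

theorem mem_upperEndpoints {v : Fin t} : v ∈ M.upperEndpoints ↔ M.partner v < v := by
  simp [upperEndpoints]

theorem dBelow_eq_ite (hM : ∀ v, (M.neighborSet v).Subsingleton) (v : Fin t) :
    dBelow M v = if M.partner v < v then 1 else 0 := by
  have : {j | M.Adj v j ∧ j < v} = if M.partner v < v then {M.partner v} else ∅ := by
    ext j
    rw [Set.mem_ofPred_eq, adj_iff_partner_eq hM]
    split_ifs <;> simp only [Set.mem_singleton_iff, Set.mem_empty_iff_false] <;> grind
  rw [dBelow, this]
  split_ifs <;> simp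

theorem prod_choose_dBelow (hM : ∀ v, (M.neighborSet v).Subsingleton) :
    ∏ i : Fin t, (i : ℕ).choose (dBelow M i) = ∏ v ∈ M.upperEndpoints, (v : ℕ) := by
  rw [upperEndpoints, prod_filter]
  refine prod_congr rfl fun v _ => ?_
  rw [dBelow_eq_ite hM]
  split_ifs <;> simp

theorem ncard_edgeSet_eq_card_upperEndpoints (hM : ∀ v, (M.neighborSet v).Subsingleton) :
    M.edgeSet.ncard = #M.upperEndpoints := by
  have hedge : M.edgeSet = (fun v => s(v, M.partner v)) '' M.upperEndpoints := by
    ext e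
    induction e with
    | h u w =>
      simp only [mem_edgeSet, Set.mem_image, mem_coe, mem_upperEndpoints, Sym2.eq_iff,
        adj_iff_partner_eq hM]
      have hu := partner_involutive hM u
      have hw := partner_involutive hM w
      constructor
      · rintro ⟨hne, rfl⟩
        rcases lt_or_gt_of_ne hne with h | h
        · exact ⟨M.partner u, by rwa [hu], by grind⟩
        · exact ⟨u, h, by grind⟩
      · rintro ⟨v, hv, h⟩
        grind
  rw [hedge, Set.InjOn.ncard_image, Set.ncard_coe_finset]
  intro v hv w hw h
  simp only [mem_coe, mem_upperEndpoints] at hv hw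
  rw [Sym2.eq_iff] at h
  grind

theorem upperEndpoints_sup_edge (hM : ∀ v, (M.neighborSet v).Subsingleton)
    (ha : M.partner a = a) (hb : M.partner b = b) (hba : b < a) :
    (M ⊔ edge a b).upperEndpoints = insert a M.upperEndpoints := by
  ext v
  rw [mem_insert, mem_upperEndpoints, mem_upperEndpoints, partner_sup_edge hM ha hb hba.ne']
  split_ifs <;> grind

theorem upperEndpoints_deleteIncidenceSet (hM : ∀ v, (M.neighborSet v).Subsingleton)
    (ha : a ∈ M.upperEndpoints) :
    (M.deleteIncidenceSet a).upperEndpoints = M.upperEndpoints.erase a := by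
  rw [mem_upperEndpoints] at ha
  have := partner_involutive hM a
  ext v
  rw [mem_erase, mem_upperEndpoints, mem_upperEndpoints, partner_deleteIncidenceSet hM]
  split_ifs <;> grind

theorem lt_of_partner_ne (hM : ∀ v, (M.neighborSet v).Subsingleton)
    (ha : ∀ x ∈ M.upperEndpoints, x < a) {v : Fin t} (hv : M.partner v ≠ v) : v < a := by
  rcases lt_or_gt_of_ne hv with h | h
  · exact ha v (mem_upperEndpoints.mpr h)
  · exact h.trans (ha _ (mem_upperEndpoints.mpr (by rwa [partner_involutive hM v])))

theorem card_filter_partner_eq_add (hM : ∀ v, (M.neighborSet v).Subsingleton)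
    (ha : ∀ x ∈ M.upperEndpoints, x < a) :
    #{b ∈ Iio a | M.partner b = b} + 2 * #M.upperEndpoints = a := by
  rw [← ncard_edgeSet_eq_card_upperEndpoints hM, ← card_filter_partner_ne hM]
  have : ({v | M.partner v ≠ v} : Finset (Fin t)) = {b ∈ Iio a | ¬ M.partner b = b} := by
    ext v
    simp only [mem_filter, mem_univ, true_and, mem_Iio]
    exact ⟨fun h => ⟨lt_of_partner_ne hM ha h, h⟩, And.right⟩
  rw [this, card_filter_add_card_filter_not, Fin.card_Iio]

open Classical in
noncomputable def matchingsWithUpperEndpoints (A : Finset (Fin t)) :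
    Finset (SimpleGraph (Fin t)) :=
  {M | (∀ v, (M.neighborSet v).Subsingleton) ∧ M.upperEndpoints = A}

theorem mem_matchingsWithUpperEndpoints :
    M ∈ matchingsWithUpperEndpoints A ↔
      (∀ v, (M.neighborSet v).Subsingleton) ∧ M.upperEndpoints = A := by
  simp [matchingsWithUpperEndpoints]

theorem matchingsWithUpperEndpoints_empty :
    matchingsWithUpperEndpoints (∅ : Finset (Fin t)) = {⊥} := by
  ext M
  rw [mem_matchingsWithUpperEndpoints, mem_singleton]
  constructor
  · rintro ⟨hM, hU⟩
    ext v w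
    refine ⟨fun h => ?_, False.elim⟩
    have hv := partner_eq_of_adj hM h
    have hw := partner_eq_of_adj hM h.symm
    rcases lt_or_gt_of_ne h.ne with hlt | hlt
    · exact notMem_empty w (hU ▸ mem_upperEndpoints.mpr (hw ▸ hlt))
    · exact notMem_empty v (hU ▸ mem_upperEndpoints.mpr (hv ▸ hlt))
  · rintro rfl
    refine ⟨fun v => by simp, eq_empty_of_forall_notMem fun v hv => ?_⟩
    rw [mem_upperEndpoints, partner_eq_self fun w => id] at hv
    exact lt_irrefl v hv

theorem deleteIncidenceSet_mem_matchingsWithUpperEndpoints (ha : ∀ x ∈ A, x < a)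
    (hM : M ∈ matchingsWithUpperEndpoints (insert a A)) :
    M.deleteIncidenceSet a ∈ matchingsWithUpperEndpoints A := by
  obtain ⟨hM, hU⟩ := mem_matchingsWithUpperEndpoints.mp hM
  refine mem_matchingsWithUpperEndpoints.mpr ⟨neighborSet_subsingleton_of_forall_adj_iff
    fun _ _ => adj_deleteIncidenceSet_iff hM, ?_⟩
  rw [upperEndpoints_deleteIncidenceSet hM (hU ▸ mem_insert_self a A), hU,
    erase_insert fun h => lt_irrefl a (ha a h)]

theorem card_filter_deleteIncidenceSet_eq (ha : ∀ x ∈ A, x < a) {M' : SimpleGraph (Fin t)}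
    (hM' : M' ∈ matchingsWithUpperEndpoints A) [DecidableEq (SimpleGraph (Fin t))] :
    #{M ∈ matchingsWithUpperEndpoints (insert a A) | M.deleteIncidenceSet a = M'} =
      #{b ∈ Iio a | M'.partner b = b} := by
  obtain ⟨hM'_match, rfl⟩ := mem_matchingsWithUpperEndpoints.mp hM'
  have hpa : M'.partner a = a := by
    by_contra h
    exact lt_irrefl a (lt_of_partner_ne hM'_match ha h)
  apply card_nbij' (fun M => M.partner a) (fun b => M' ⊔ edge a b)
  · intro M hM
    obtain ⟨hM_mem, rfl⟩ := mem_filter.mp hM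
    obtain ⟨hM_match, hU⟩ := mem_matchingsWithUpperEndpoints.mp hM_mem
    have hlt := mem_upperEndpoints.mp (hU ▸ mem_insert_self a _)
    simp [partner_deleteIncidenceSet hM_match, hlt]
  · intro b hb
    obtain ⟨hba, hb⟩ := mem_filter.mp hb
    have hba := mem_Iio.mp hba
    refine mem_filter.mpr ⟨mem_matchingsWithUpperEndpoints.mpr ⟨?_, ?_⟩, ?_⟩
    · exact neighborSet_subsingleton_of_forall_adj_iff fun _ _ =>
        adj_sup_edge_iff hM'_match hpa hb hba.ne'
    · exact upperEndpoints_sup_edge hM'_match hpa hb hba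
    · exact deleteIncidenceSet_sup_edge fun w h =>
        h.ne (hpa.symm.trans (partner_eq_of_adj hM'_match h))
  · intro M hM
    obtain ⟨hM_mem, rfl⟩ := mem_filter.mp hM
    obtain ⟨hM_match, hU⟩ := mem_matchingsWithUpperEndpoints.mp hM_mem
    exact sup_edge_deleteIncidenceSet hM_match
      (mem_upperEndpoints.mp (hU ▸ mem_insert_self a _)).ne
  · intro b hb
    obtain ⟨hba, hb⟩ := mem_filter.mp hb
    simp [partner_sup_edge hM'_match hpa hb (mem_Iio.mp hba).ne']

theorem card_matchingsWithUpperEndpoints_insert (ha : ∀ x ∈ A, x < a) :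
    #(matchingsWithUpperEndpoints (insert a A)) =
      ∑ M ∈ matchingsWithUpperEndpoints A, #{b ∈ Iio a | M.partner b = b} := by
  classical
  rw [card_eq_sum_card_fiberwise fun M hM =>
    deleteIncidenceSet_mem_matchingsWithUpperEndpoints ha hM]
  exact sum_congr rfl fun M' hM' => card_filter_deleteIncidenceSet_eq ha hM'

theorem card_matchingsWithUpperEndpoints (A : Finset (Fin t)) :
    (#(matchingsWithUpperEndpoints A) : ℤ) = ∏ a ∈ A, ((a : ℤ) - 2 * #{x ∈ A | x < a}) := by
  induction A using Finset.induction_on_max with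
  | empty => simp [matchingsWithUpperEndpoints_empty]
  | insert a A ha ih =>
    have hna : a ∉ A := fun h => lt_irrefl a (ha a h)
    have hfiber : ∀ M ∈ matchingsWithUpperEndpoints A,
        (#{b ∈ Iio a | M.partner b = b} : ℤ) = a - 2 * #A := by
      intro M hM
      obtain ⟨hM_match, rfl⟩ := mem_matchingsWithUpperEndpoints.mp hM
      have := card_filter_partner_eq_add hM_match ha
      omega
    have hrank_a : #{x ∈ insert a A | x < a} = #A := by
      rw [filter_insert, if_neg (lt_irrefl a), filter_true_of_mem ha]
    have hrank (x : Fin t) (hx : x ∈ A) : #{y ∈ insert a A | y < x} = #{y ∈ A | y < x} := by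
      rw [filter_insert, if_neg (ha x hx).not_gt]
    rw [card_matchingsWithUpperEndpoints_insert ha, Nat.cast_sum, sum_congr rfl hfiber,
      sum_const, nsmul_eq_mul, prod_insert hna, hrank_a,
      prod_congr rfl fun x hx => by rw [hrank x hx], ih, mul_comm]

open Classical in
theorem sum_matchings_eq_sum_powersetCard {β : Type*} [AddCommMonoid β] (s : ℕ)
    (F : Finset (Fin t) → β) :
    ∑ M ∈ {M : SimpleGraph (Fin t) |
        (∀ v, (M.neighborSet v).Subsingleton) ∧ #M.upperEndpoints = s}, F M.upperEndpoints =
      ∑ A ∈ powersetCard s {v : Fin t | 0 < (v : ℕ)},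
        #(matchingsWithUpperEndpoints A) • F A := by
  rw [← sum_fiberwise_of_maps_to (g := upperEndpoints) fun M hM => ?_]
  · refine sum_congr rfl fun A hA => ?_
    have hfiber : ({M ∈ {M : SimpleGraph (Fin t) |
        (∀ v, (M.neighborSet v).Subsingleton) ∧ #M.upperEndpoints = s} |
          M.upperEndpoints = A} : Finset _) = matchingsWithUpperEndpoints A := by
      ext M
      simp only [mem_filter, mem_univ, true_and, mem_matchingsWithUpperEndpoints]
      have := (mem_powersetCard.mp hA).2
      grind
    rw [hfiber, sum_congr rfl fun M hM => by rw [(mem_matchingsWithUpperEndpoints.mp hM).2],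
      sum_const]
  · refine mem_powersetCard.mpr ⟨fun v hv => ?_, (mem_filter.mp hM).2.2⟩
    have := mem_upperEndpoints.mp hv
    simp only [mem_filter, mem_univ, true_and]
    omega

open Classical in
theorem likelihood_eq_sum_matchings {s : ℕ} {G : SimpleGraph (Fin t)}
    (hG : ∀ v, (G.neighborSet v).Subsingleton) (hcard : G.edgeSet.ncard = s) :
    likelihood G = (t.factorial : ℝ)⁻¹ *
      ∑ M ∈ {M : SimpleGraph (Fin t) |
        (∀ v, (M.neighborSet v).Subsingleton) ∧ #M.upperEndpoints = s},
        (∏ v ∈ M.upperEndpoints, ((v : ℕ) : ℝ))⁻¹ := by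
  rw [likelihood, mul_sum]
  refine sum_congr (filter_congr fun M _ => ?_) fun M hM => ?_
  · rw [nonempty_iso_iff hG, hcard]
    exact and_congr_right fun hM => by rw [ncard_edgeSet_eq_card_upperEndpoints hM]
  · rw [← Nat.cast_prod, prod_choose_dBelow (mem_filter.mp hM).2.1, Nat.cast_prod, one_div,
      mul_inv]

end Fin

end SimpleGraph

open SimpleGraph in
theorem likelihood_matching_general {t s : ℕ}
    (G : SimpleGraph (Fin t))
    (hcard : G.edgeSet.ncard = s)
    (hmatch : ∀ v : Fin t, (G.neighborSet v).ncard ≤ 1) :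
    likelihood G =
      (1 / (t.factorial : ℝ)) *
        ∑ A ∈ (Finset.Icc 2 t).powersetCard s,
          ∏ j ∈ Finset.range s,
            (((A.sort (· ≤ ·)).getD j 0 : ℝ) + 1 - 2 * ((j : ℝ) + 1)) /
              (((A.sort (· ≤ ·)).getD j 0 : ℝ) - 1) := by
  have hG : ∀ v, (G.neighborSet v).Subsingleton := fun v =>
    Set.ncard_le_one_iff_subsingleton.mp (hmatch v)
  rw [likelihood_eq_sum_matchings hG hcard,
    sum_matchings_eq_sum_powersetCard s fun A => (∏ v ∈ A, ((v : ℕ) : ℝ))⁻¹,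
    sum_powersetCard_Icc_prod_sort t s fun n j => ((n : ℝ) + 1 - 2 * ((j : ℝ) + 1)) / ((n : ℝ) - 1),
    one_div]
  congr 1
  refine sum_congr rfl fun A _ => ?_
  rw [nsmul_eq_mul, ← Int.cast_natCast, card_matchingsWithUpperEndpoints, Int.cast_prod,
    ← prod_inv_distrib, ← prod_mul_distrib]
  refine prod_congr rfl fun a _ => ?_
  push_cast
  ring

theorem likelihood_matching {t s : ℕ} (ht : 1 ≤ t) (hs : 2 * s ≤ t)
    (G : SimpleGraph (Fin t))
    (hcard : G.edgeSet.ncard = s)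
    (hmatch : ∀ v : Fin t, (G.neighborSet v).ncard ≤ 1) :
    likelihood G =
      (1 / (t.factorial : ℝ)) *
        ∑ A ∈ (Finset.Icc 2 t).powersetCard s,
          ∏ j ∈ Finset.range s,
            (((A.sort (· ≤ ·)).getD j 0 : ℝ) + 1 - 2 * ((j : ℝ) + 1)) /
              (((A.sort (· ≤ ·)).getD j 0 : ℝ) - 1) :=
  likelihood_matching_general G hcard hmatch
end

section
/- Let G be a simple graph on t ≥ 4 vertices whose edge set consists of exactly two disjoint edges (a matching with two edges, incident with four distinct vertices). Then L(G) = (1/t!) · Σ_{i=2}^{t} Σ_{j=i+1}^{t} (j−3)/(j−1), i.e., L(G) = (1/t!) · Σ_{i=2}^{t} ((i−2)/i + (i−1)/(i+1) + ⋯ + (t−3)/(t−1)). -/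
open Finset

/-!
Write vertices `0, …, t-1`, so that vertex `i` contributes `C(i, d_i)`. Every labeled copy of `G`
is the matching `{ab, cd}` for exactly one quadruple with `a < b`, `c < d`, `b < d` and `a, c, b`
distinct. In it only `b` and `d` have a smaller neighbour, so its weight is `1/(t! · b · d)`. For
fixed `b < d` there are `b` choices of `a` and `d - 2` of `c`, whence
`L(G) = (1/t!) Σ_{0 < b < d < t} (d - 2)/d`, the claimed sum after shifting both indices by one.
-/

theorem SimpleGraph.Iso.ncard_edgeSet_eq {V W : Type*} {G : SimpleGraph V} {G' : SimpleGraph W}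
    (f : G ≃g G') : G.edgeSet.ncard = G'.edgeSet.ncard := by
  rw [← Nat.card_coe_set_eq, ← Nat.card_coe_set_eq, Nat.card_congr f.mapEdgeSet]

theorem SimpleGraph.Iso.ncard_neighborSet_eq {V W : Type*} {G : SimpleGraph V}
    {G' : SimpleGraph W} (f : G ≃g G') (v : V) :
    (G.neighborSet v).ncard = (G'.neighborSet (f v)).ncard := by
  rw [← Nat.card_coe_set_eq, ← Nat.card_coe_set_eq, Nat.card_congr (f.mapNeighborSet v)]

section TwoEdgeGraph

variable {V : Type*}

def twoEdgeGraph (a b c d : V) : SimpleGraph V :=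
  SimpleGraph.fromEdgeSet {s(a, b), s(c, d)}

theorem twoEdgeGraph_comm (a b c d : V) : twoEdgeGraph c d a b = twoEdgeGraph a b c d := by
  rw [twoEdgeGraph, Set.pair_comm, twoEdgeGraph]

theorem twoEdgeGraph_edgeSet {a b c d : V} (hab : a ≠ b) (hcd : c ≠ d) :
    (twoEdgeGraph a b c d).edgeSet = {s(a, b), s(c, d)} := by
  rw [twoEdgeGraph, SimpleGraph.edgeSet_fromEdgeSet, sdiff_eq_left]
  simp [Set.disjoint_left, hab, hcd]

theorem nonempty_twoEdgeGraph_iso [Finite V] {a b c d a' b' c' d' : V}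
    (h : Function.Injective ![a, b, c, d]) (h' : Function.Injective ![a', b', c', d']) :
    Nonempty (twoEdgeGraph a b c d ≃g twoEdgeGraph a' b' c' d') := by
  obtain ⟨σ, hσ⟩ := Equiv.Perm.exists_extending_pair _ _ h h'
  obtain ⟨rfl, rfl, rfl, rfl⟩ : σ a = a' ∧ σ b = b' ∧ σ c = c' ∧ σ d = d' := by
    simpa [Fin.forall_fin_succ] using hσ
  exact ⟨⟨σ, by simp [twoEdgeGraph]⟩⟩

end TwoEdgeGraph

section Sorted

variable {V : Type*} [LinearOrder V]

/-- The normal form of the matching `{ab, cd}`; every matching with two edges has exactly one. -/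
def IsSortedMatching (a b c d : V) : Prop :=
  a < b ∧ c < d ∧ b < d ∧ a ≠ c ∧ b ≠ c

instance (a b c d : V) : Decidable (IsSortedMatching a b c d) :=
  inferInstanceAs (Decidable (_ ∧ _))

theorem IsSortedMatching.injective {a b c d : V} (h : IsSortedMatching a b c d) :
    Function.Injective ![a, b, c, d] := by
  obtain ⟨hab, hcd, hbd, hac, hbc⟩ := h
  intro i j hij
  fin_cases i <;> fin_cases j <;> simp at hij ⊢ <;> order

theorem IsSortedMatching.twoEdgeGraph_injective {a b c d a' b' c' d' : V}
    (h : IsSortedMatching a b c d) (h' : IsSortedMatching a' b' c' d')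
    (he : twoEdgeGraph a b c d = twoEdgeGraph a' b' c' d') :
    a = a' ∧ b = b' ∧ c = c' ∧ d = d' := by
  obtain ⟨hab, hcd, hbd, hac, hbc⟩ := h
  obtain ⟨hab', hcd', hbd', hac', hbc'⟩ := h'
  have := congrArg SimpleGraph.edgeSet he
  rw [twoEdgeGraph_edgeSet hab.ne hcd.ne, twoEdgeGraph_edgeSet hab'.ne hcd'.ne,
    Set.pair_eq_pair_iff] at this
  simp only [Sym2.eq_iff] at this
  grind

theorem SimpleGraph.exists_lt_eq_mk_of_mem_edgeSet {H : SimpleGraph V} {e : Sym2 V}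
    (he : e ∈ H.edgeSet) : ∃ a b, a < b ∧ e = s(a, b) := by
  induction e using Sym2.ind with | _ x y => ?_
  rcases lt_or_gt_of_ne (H.ne_of_adj he) with h | h
  · exact ⟨x, y, h, rfl⟩
  · exact ⟨y, x, h, Sym2.eq_swap⟩

theorem exists_isSortedMatching [Finite V] {H : SimpleGraph V} (hcard : H.edgeSet.ncard = 2)
    (hdeg : ∀ v, (H.neighborSet v).ncard ≤ 1) :
    ∃ a b c d, IsSortedMatching a b c d ∧ H = twoEdgeGraph a b c d := by
  have hunique : ∀ {x y z}, H.Adj x y → H.Adj x z → y = z := fun hy hz =>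
    (Set.ncard_le_one_iff (Set.toFinite _)).mp (hdeg _) hy hz
  obtain ⟨e, f, hef, hE⟩ := Set.ncard_eq_two.mp hcard
  obtain ⟨a, b, hab, rfl⟩ := H.exists_lt_eq_mk_of_mem_edgeSet (e := e) (by simp [hE])
  obtain ⟨c, d, hcd, rfl⟩ := H.exists_lt_eq_mk_of_mem_edgeSet (e := f) (by simp [hE])
  have hH : H = twoEdgeGraph a b c d := by
    rw [twoEdgeGraph, ← hE, SimpleGraph.fromEdgeSet_edgeSet]
  have hadj₁ : H.Adj a b := by simp [hH, twoEdgeGraph, hab.ne]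
  have hadj₂ : H.Adj c d := by simp [hH, twoEdgeGraph, hcd.ne]
  have hac : a ≠ c := by rintro rfl; exact hef (by rw [hunique hadj₁ hadj₂])
  have had : a ≠ d := by
    rintro rfl; exact hef (by rw [hunique hadj₁ hadj₂.symm, Sym2.eq_swap])
  have hbc : b ≠ c := by
    rintro rfl; exact hef (by rw [hunique hadj₁.symm hadj₂, Sym2.eq_swap])
  have hbd : b ≠ d := by rintro rfl; exact hef (by rw [hunique hadj₁.symm hadj₂.symm])
  rcases lt_or_gt_of_ne hbd with hlt | hlt
  · exact ⟨a, b, c, d, ⟨hab, hcd, hlt, hac, hbc⟩, hH⟩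
  · exact ⟨c, d, a, b, ⟨hcd, hab, hlt, hac.symm, had.symm⟩,
      hH.trans (twoEdgeGraph_comm ..).symm⟩

end Sorted

section Likelihood

variable {t : ℕ}

theorem dBelow_twoEdgeGraph {a b c d : Fin t} (hab : a < b) (hcd : c < d) (hbd : b ≠ d)
    (i : Fin t) : dBelow (twoEdgeGraph a b c d) i = if i = b ∨ i = d then 1 else 0 := by
  have hbelow : {j | (twoEdgeGraph a b c d).Adj i j ∧ j < i} =
      {j | (i = b ∧ j = a) ∨ (i = d ∧ j = c)} := by
    ext j
    simp only [twoEdgeGraph, SimpleGraph.fromEdgeSet_adj, Set.mem_insert_iff,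
      Set.mem_singleton_iff, Sym2.eq_iff, Set.mem_ofPred_eq]
    grind
  rw [dBelow, hbelow]
  split_ifs with h
  · rcases h with rfl | rfl
    · simp [hbd]
    · simp [hbd.symm]
  · simp [not_or.mp h]

theorem prod_choose_dBelow_twoEdgeGraph {a b c d : Fin t} (hab : a < b) (hcd : c < d)
    (hbd : b ≠ d) :
    ∏ i : Fin t, (i : ℕ).choose (dBelow (twoEdgeGraph a b c d) i) = b * d := by
  simp_rw [dBelow_twoEdgeGraph hab hcd hbd, apply_ite, Nat.choose_one_right,
    Nat.choose_zero_right]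
  rw [← prod_filter, show ({i | i = b ∨ i = d} : Finset (Fin t)) = {b, d} by ext; simp,
    prod_pair hbd]

/-- A sorted matching `{ab, cd}` is recorded as `((b, d), (a, c))`: upper endpoints first. -/
def sortedMatchings (t : ℕ) : Finset ((Fin t × Fin t) × (Fin t × Fin t)) :=
  univ.filter fun x => IsSortedMatching x.2.1 x.1.1 x.2.2 x.1.2

theorem likelihood_eq_sum_sortedMatchings {G : SimpleGraph (Fin t)}
    (hcard : G.edgeSet.ncard = 2) (hdeg : ∀ v, (G.neighborSet v).ncard ≤ 1) :
    likelihood G =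
      ∑ x ∈ sortedMatchings t, 1 / ((t.factorial : ℝ) * ((x.1.1 * x.1.2 : ℕ) : ℝ)) := by
  classical
  obtain ⟨a₀, b₀, c₀, d₀, h₀, rfl⟩ := exists_isSortedMatching hcard hdeg
  symm
  refine sum_bij (fun x _ => twoEdgeGraph x.2.1 x.1.1 x.2.2 x.1.2) ?_ ?_ ?_ ?_
  · rintro ⟨⟨b, d⟩, ⟨a, c⟩⟩ hx
    simp only [sortedMatchings, mem_filter, mem_univ, true_and] at hx
    simpa using nonempty_twoEdgeGraph_iso hx.injective h₀.injective
  · rintro ⟨⟨b, d⟩, ⟨a, c⟩⟩ hx ⟨⟨b', d'⟩, ⟨a', c'⟩⟩ hx' he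
    simp only [sortedMatchings, mem_filter, mem_univ, true_and] at hx hx'
    obtain ⟨rfl, rfl, rfl, rfl⟩ := hx.twoEdgeGraph_injective hx' he
    rfl
  · intro G' hG'
    obtain ⟨f⟩ := (mem_filter.mp hG').2
    obtain ⟨a, b, c, d, h, rfl⟩ := exists_isSortedMatching (f.ncard_edgeSet_eq.trans hcard)
      fun v => (f.ncard_neighborSet_eq v).trans_le (hdeg (f v))
    exact ⟨((b, d), (a, c)), by simpa [sortedMatchings] using h, rfl⟩
  · rintro ⟨⟨b, d⟩, ⟨a, c⟩⟩ hx
    simp only [sortedMatchings, mem_filter, mem_univ, true_and] at hx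
    obtain ⟨hab, hcd, hbd, -⟩ := hx
    rw [← Nat.cast_prod, prod_choose_dBelow_twoEdgeGraph hab hcd hbd.ne]

theorem card_isSortedMatching_of_lt_of_lt {a b d : Fin t} (hab : a < b) (hbd : b < d) :
    #{c | IsSortedMatching a b c d} = (d : ℕ) - 2 := by
  have hfilter :
      ({c | IsSortedMatching a b c d} : Finset (Fin t)) = ((Iio d).erase a).erase b := by
    ext c
    simp only [mem_erase, mem_Iio]
    grind [IsSortedMatching]
  rw [hfilter, card_erase_of_mem (by simp [hab.ne', hbd]),
    card_erase_of_mem (by simp [hab.trans hbd]), Fin.card_Iio]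
  rfl

theorem card_lowerEnds_isSortedMatching (b d : Fin t) :
    #{l : Fin t × Fin t | IsSortedMatching l.1 b l.2 d} =
      if b < d then (b : ℕ) * ((d : ℕ) - 2) else 0 := by
  split_ifs with hbd
  · have hinner (a : Fin t) :
        ∑ c, (if IsSortedMatching a b c d then 1 else 0) =
          if a < b then (d : ℕ) - 2 else 0 := by
      split_ifs with hab
      · rw [← card_filter, card_isSortedMatching_of_lt_of_lt hab hbd]
      · exact sum_eq_zero fun c _ => if_neg fun h => hab h.1
    rw [card_filter, Fintype.sum_prod_type]
    simp_rw [hinner]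
    rw [← sum_filter, sum_const, filter_gt_eq_Iio, Fin.card_Iio, smul_eq_mul]
  · exact card_eq_zero.mpr (filter_eq_empty_iff.mpr fun l _ h => hbd h.2.2.1)

theorem sum_sortedMatchings {M : Type*} [AddCommMonoid M] (w : Fin t → Fin t → M) :
    ∑ x ∈ sortedMatchings t, w x.1.1 x.1.2 =
      ∑ b : Fin t, ∑ d : Fin t,
        if b < d then ((b : ℕ) * ((d : ℕ) - 2)) • w b d else 0 := by
  rw [sortedMatchings, sum_filter, Fintype.sum_prod_type, Fintype.sum_prod_type]
  refine sum_congr rfl fun b _ => sum_congr rfl fun d _ => ?_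
  rw [← sum_filter]
  dsimp only
  rw [sum_const, card_lowerEnds_isSortedMatching, ite_smul, zero_smul ℕ]

end Likelihood

theorem sum_Icc_add_one_eq_sum_range {M : Type*} [AddCommMonoid M] (f : ℕ → M) (m n : ℕ) :
    ∑ i ∈ Icc (m + 1) n, f i = ∑ k ∈ range n, if m ≤ k then f (k + 1) else 0 := by
  rw [← sum_filter, ← Ico_add_one_right_eq_Icc, ← sum_Ico_add']
  congr 1
  ext k
  simp only [mem_filter, mem_range, mem_Ico]
  omega

theorem sum_Icc_Icc_eq_sum_fin {M : Type*} [AddCommMonoid M] (g : ℕ → ℕ → M) (t : ℕ) :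
    ∑ i ∈ Icc 2 t, ∑ j ∈ Icc (i + 1) t, g i j =
      ∑ b : Fin t, ∑ d : Fin t, if 0 < (b : ℕ) ∧ b < d then g (b + 1) (d + 1) else 0 := by
  rw [sum_Icc_add_one_eq_sum_range _ 1]
  simp only [sum_Icc_add_one_eq_sum_range, ite_and, sum_ite_irrel, sum_const_zero,
    Finset.sum_range, Fin.lt_def, Nat.add_one_le_iff, Nat.pos_iff_ne_zero]

theorem ite_lt_nsmul_one_div_factorial_mul_eq (t b d : ℕ) :
    (if b < d then (b * (d - 2)) • (1 / ((t.factorial : ℝ) * ((b * d : ℕ) : ℝ))) else 0) =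
      if 0 < b ∧ b < d then
        1 / (t.factorial : ℝ) * ((((d + 1 : ℕ) : ℝ) - 3) / (((d + 1 : ℕ) : ℝ) - 1))
      else 0 := by
  by_cases hb : b = 0
  · simp [hb]
  simp only [Nat.pos_of_ne_zero hb, true_and]
  split_ifs with hbd
  · have hb0 : (b : ℝ) ≠ 0 := Nat.cast_ne_zero.mpr hb
    have hd0 : (d : ℝ) ≠ 0 := Nat.cast_ne_zero.mpr (by omega)
    rw [nsmul_eq_mul]
    push_cast [Nat.cast_sub (by omega : 2 ≤ d)]
    rw [add_sub_cancel_right]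
    field_simp
    ring
  · rfl

theorem likelihood_twoDisjointEdges_general {t : ℕ} (G : SimpleGraph (Fin t))
    (hcard : G.edgeSet.ncard = 2)
    (hdisj : ∀ v : Fin t, (G.neighborSet v).ncard ≤ 1) :
    likelihood G =
      (1 / (t.factorial : ℝ)) *
        ∑ i ∈ Finset.Icc 2 t, ∑ j ∈ Finset.Icc (i + 1) t,
          ((j : ℝ) - 3) / ((j : ℝ) - 1) := by
  rw [likelihood_eq_sum_sortedMatchings hcard hdisj,
    sum_sortedMatchings fun b d => 1 / ((t.factorial : ℝ) * ((b * d : ℕ) : ℝ)),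
    mul_sum]
  simp_rw [mul_sum]
  rw [sum_Icc_Icc_eq_sum_fin fun _ j =>
    1 / (t.factorial : ℝ) * (((j : ℝ) - 3) / ((j : ℝ) - 1))]
  refine sum_congr rfl fun b _ => sum_congr rfl fun d _ => ?_
  simpa only [Fin.lt_def] using ite_lt_nsmul_one_div_factorial_mul_eq t b d

theorem likelihood_twoDisjointEdges {t : ℕ} (ht : 4 ≤ t) (G : SimpleGraph (Fin t))
    (hcard : G.edgeSet.ncard = 2)
    (hdisj : ∀ v : Fin t, (G.neighborSet v).ncard ≤ 1) :
    likelihood G =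
      (1 / (t.factorial : ℝ)) *
        ∑ i ∈ Finset.Icc 2 t, ∑ j ∈ Finset.Icc (i + 1) t,
          ((j : ℝ) - 3) / ((j : ℝ) - 1) :=
  likelihood_twoDisjointEdges_general G hcard hdisj
end

section
/- Let G be a simple graph on t ≥ 1 vertices. Under the random growth process, the probability that the random graph produced after t steps is isomorphic to G equals Σ_{G' a labeled copy of G} 1/(t! · ∏_{i=1}^{t} C(i−1, d_i(G'))), where the sum is over all simple graphs G' on the vertex set {1,…,t} isomorphic to G, d_i(G') is the number of neighbors j < i of vertex i in G', and C(n,k) is the binomial coefficient. -/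
open Finset

/-- Extend a graph on `{1,…,m}` by a new vertex (the last one) joined to
exactly the vertices in `S`. -/
def extendGraph {m : ℕ} (G : SimpleGraph (Fin m)) (S : Finset (Fin m)) :
    SimpleGraph (Fin (m + 1)) :=
  SimpleGraph.fromRel (fun u v =>
    (∃ (hu : u ≠ Fin.last m) (hv : v ≠ Fin.last m),
      G.Adj (u.castPred hu) (v.castPred hv)) ∨
    (u = Fin.last m ∧ ∃ hv : v ≠ Fin.last m, v.castPred hv ∈ S))

/-- The random growth process: starting from the one-vertex graph, at each step a
degree `k` is chosen uniformly at random from `{0,…,i-1}` (where `i-1` is the current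
number of vertices), then a uniformly random `k`-subset `S` of the existing vertices
is chosen, and a new vertex is added joined to each vertex of `S`; all choices at
different steps are independent.  `growthProcess t` is the distribution of the
resulting random graph on `t` vertices. -/
noncomputable def growthProcess : (t : ℕ) → PMF (SimpleGraph (Fin t))
  | 0 => PMF.pure ⊥
  | m + 1 =>
    (growthProcess m).bind fun G =>
      (PMF.uniformOfFintype (Fin (m + 1))).bind fun k =>
        (PMF.uniformOfFinset ((Finset.univ : Finset (Fin m)).powersetCard k.val)
            (by
              rw [Finset.powersetCard_nonempty]
              simpa using Nat.lt_succ_iff.mp k.isLt)).bind fun S =>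
          PMF.pure (extendGraph G S)

/-!
A graph `H` on `Fin t` is produced by exactly one history of the growth process: its
restrictions to the initial segments `Fin i`, since `(G, S) ↦ extendGraph G S` is a bijection.
The step adding vertex `i` chooses the degree `d_i(H)` with probability `1 / i` and then the
right `d_i(H)`-subset with probability `1 / C(i - 1, d_i(H))`, so `H` has probability
`1 / (t! ∏ C(i - 1, d_i(H)))`; summing over the labeled copies of `G` gives the theorem.
-/

section Extension

variable {m : ℕ}

@[simp]
lemma extendGraph_adj_castSucc_castSucc (G : SimpleGraph (Fin m)) (S : Finset (Fin m))
    (u v : Fin m) : (extendGraph G S).Adj u.castSucc v.castSucc ↔ G.Adj u v := by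
  simp [extendGraph, (Fin.castSucc_lt_last _).ne, G.adj_comm v u]
  exact G.ne_of_adj

@[simp]
lemma extendGraph_adj_last_castSucc (G : SimpleGraph (Fin m)) (S : Finset (Fin m))
    (v : Fin m) : (extendGraph G S).Adj (Fin.last m) v.castSucc ↔ v ∈ S := by
  simp [extendGraph, (Fin.castSucc_lt_last _).ne']

@[simp]
lemma extendGraph_adj_castSucc_last (G : SimpleGraph (Fin m)) (S : Finset (Fin m))
    (v : Fin m) : (extendGraph G S).Adj v.castSucc (Fin.last m) ↔ v ∈ S := by
  rw [SimpleGraph.adj_comm, extendGraph_adj_last_castSucc]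

open scoped Classical in
noncomputable def lastNeighbors (H : SimpleGraph (Fin (m + 1))) : Finset (Fin m) :=
  univ.filter fun j => H.Adj (Fin.last m) j.castSucc

@[simp]
lemma mem_lastNeighbors {H : SimpleGraph (Fin (m + 1))} {j : Fin m} :
    j ∈ lastNeighbors H ↔ H.Adj (Fin.last m) j.castSucc := by
  simp [lastNeighbors]

noncomputable def extendGraphEquiv :
    SimpleGraph (Fin m) × Finset (Fin m) ≃ SimpleGraph (Fin (m + 1)) where
  toFun GS := extendGraph GS.1 GS.2
  invFun H := (H.comap Fin.castSucc, lastNeighbors H)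
  left_inv := fun ⟨G, S⟩ => by ext <;> simp
  right_inv H := by
    ext u v
    induction u using Fin.lastCases <;> induction v using Fin.lastCases <;>
      simp [H.adj_comm _ (Fin.last m)]

lemma extendGraphEquiv_symm_apply (H : SimpleGraph (Fin (m + 1))) :
    extendGraphEquiv.symm H = (H.comap Fin.castSucc, lastNeighbors H) :=
  rfl

lemma dBelow_castSucc_s10 (H : SimpleGraph (Fin (m + 1))) (i : Fin m) :
    dBelow H i.castSucc = dBelow (H.comap Fin.castSucc) i := by
  have : {j | H.Adj i.castSucc j ∧ j < i.castSucc} =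
      Fin.castSucc '' {j | H.Adj i.castSucc j.castSucc ∧ j < i} := by
    ext j
    induction j using Fin.lastCases <;> simp [(Fin.castSucc_lt_last _).not_gt]
  rw [dBelow, dBelow, this, Set.ncard_image_of_injective _ (Fin.castSucc_injective m)]
  rfl

lemma dBelow_last_s10 (H : SimpleGraph (Fin (m + 1))) :
    dBelow H (Fin.last m) = (lastNeighbors H).card := by
  have : {j | H.Adj (Fin.last m) j ∧ j < Fin.last m} = Fin.castSucc '' ↑(lastNeighbors H) := by
    ext j
    induction j using Fin.lastCases <;> simp [Fin.castSucc_lt_last]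
  rw [dBelow, this, Set.ncard_image_of_injective _ (Fin.castSucc_injective m),
    Set.ncard_coe_finset]

lemma prod_choose_dBelow_succ (H : SimpleGraph (Fin (m + 1))) :
    ∏ i : Fin (m + 1), (i : ℕ).choose (dBelow H i) =
      (∏ i : Fin m, (i : ℕ).choose (dBelow (H.comap Fin.castSucc) i)) *
        m.choose (lastNeighbors H).card := by
  simp [Fin.prod_univ_castSucc, dBelow_castSucc_s10, dBelow_last_s10]

end Extension

lemma ENNReal.inv_natCast_mul (a b : ℕ) :
    ((a * b : ℕ) : ENNReal)⁻¹ = (a : ENNReal)⁻¹ * (b : ENNReal)⁻¹ := by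
  rw [Nat.cast_mul, ENNReal.mul_inv (.inr (natCast_ne_top b)) (.inl (natCast_ne_top a))]

lemma PMF.bind_map_equiv_apply {α β γ : Type*} (p : PMF α) (q : PMF β) (e : α × β ≃ γ)
    (c : γ) : (p.bind fun a => q.map fun b => e (a, b)) c = p (e.symm c).1 * q (e.symm c).2 := by
  classical
  have hmap (a : α) :
      (q.map fun b => e (a, b)) c = if (e.symm c).1 = a then q (e.symm c).2 else 0 := by
    simp_rw [PMF.map_apply, ← e.symm_apply_eq, Prod.ext_iff]
    by_cases ha : (e.symm c).1 = a <;> simp [ha]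
  simp_rw [PMF.bind_apply, hmap, mul_ite, mul_zero, tsum_ite_eq']

/-- The neighbourhood of the new vertex in one step of `growthProcess`. -/
noncomputable def randomSubset (m : ℕ) : PMF (Finset (Fin m)) :=
  (PMF.uniformOfFintype (Fin (m + 1))).bind fun k =>
    PMF.uniformOfFinset (univ.powersetCard k.val) (by
      rw [Finset.powersetCard_nonempty]
      simpa using Nat.lt_succ_iff.mp k.isLt)

lemma randomSubset_apply (m : ℕ) (S : Finset (Fin m)) :
    randomSubset m S = (((m + 1) * m.choose S.card : ℕ) : ENNReal)⁻¹ := by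
  have hS : S.card < m + 1 := Nat.lt_succ_of_le (by simpa using S.card_le_univ)
  rw [randomSubset, PMF.bind_apply, tsum_eq_single ⟨S.card, hS⟩]
  · rw [ENNReal.inv_natCast_mul]
    simp [PMF.uniformOfFinset_apply]
  · intro k hk
    simp [PMF.uniformOfFinset_apply, (Fin.val_ne_of_ne hk).symm]

lemma growthProcess_succ (m : ℕ) :
    growthProcess (m + 1) =
      (growthProcess m).bind fun G => (randomSubset m).map fun S => extendGraphEquiv (G, S) := by
  rw [growthProcess]
  simp only [randomSubset, PMF.map, PMF.bind_bind]
  rfl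

lemma growthProcess_apply (t : ℕ) (H : SimpleGraph (Fin t)) :
    growthProcess t H =
      ((t.factorial * ∏ i : Fin t, (i : ℕ).choose (dBelow H i) : ℕ) : ENNReal)⁻¹ := by
  induction t with
  | zero => simp [growthProcess, Subsingleton.elim H ⊥]
  | succ m ih =>
    rw [growthProcess_succ, PMF.bind_map_equiv_apply, extendGraphEquiv_symm_apply, ih,
      randomSubset_apply, ← ENNReal.inv_natCast_mul, prod_choose_dBelow_succ, Nat.factorial_succ]
    congr 2
    ring

open Classical in
theorem growthProcess_prob_isomorphic_general {t : ℕ} (G : SimpleGraph (Fin t)) :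
    (growthProcess t).toOuterMeasure {H | Nonempty (H ≃g G)} =
      ∑ H ∈ Finset.univ.filter (fun H : SimpleGraph (Fin t) => Nonempty (H ≃g G)),
        1 / ((t.factorial : ENNReal) * ∏ i : Fin t, ((i : ℕ).choose (dBelow H i) : ENNReal)) := by
  rw [PMF.toOuterMeasure_apply, tsum_fintype, Finset.sum_filter]
  refine Finset.sum_congr rfl fun H _ => ?_
  simp [Set.indicator_apply, growthProcess_apply, one_div]

open Classical in
theorem growthProcess_prob_isomorphic {t : ℕ} (ht : 1 ≤ t) (G : SimpleGraph (Fin t)) :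
    (growthProcess t).toOuterMeasure {H | Nonempty (H ≃g G)} =
      ∑ H ∈ Finset.univ.filter (fun H : SimpleGraph (Fin t) => Nonempty (H ≃g G)),
        1 / ((t.factorial : ENNReal) * ∏ i : Fin t, ((i : ℕ).choose (dBelow H i) : ENNReal)) :=
  growthProcess_prob_isomorphic_general G
end
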